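/- arXiv:2403.17685 — 6 statements merged into one kernel-verified Lean document; each statement's English description precedes it below -/
import Mathlib

section
/- Let n ≥ 1 be an integer. There exists a constant C > 0 depending only on n such that the following holds. Let ξ ∈ ℝ, λ > 0, and p = (p₀,…,p_n) ∈ ℤ^{n+1} with p₀ ≥ 1 and max_{1≤i≤n} |p₀ξ^i − p_i| ≤ p₀^{−λ}. Let B = ((a,b),(c,d)) ∈ M₂(ℤ) with cξ + d ≠ 0, set η := (aξ+b)/(cξ+d), and let q := φ_n(B)·p ∈ ℤ^{n+1}. Then |q₀| ≤ C(|cξ+d|^n·p₀ + ‖B‖^n·p₀^{−λ}) and max_{1≤i≤n} |q₀η^i − q_i| ≤ C·max(1,|η|)^n·‖B‖^n·p₀^{−λ}, where ‖B‖ = max{|a|,|b|,|c|,|d|}. -/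
/-!
Row `i` of `φ_n(B)` applied to `(1, x, …, xⁿ)` is the value of `(ax+b)^i (cx+d)^{n−i}` at `x`,
so `φ_n(B)·(1, ξ, …, ξⁿ) = (cξ+d)ⁿ (1, η, …, ηⁿ)`. Writing `p = p₀(1, ξ, …, ξⁿ) + e` with
`|e_j| ≤ p₀^{−λ}`, we get `q = p₀(cξ+d)ⁿ(1, η, …, ηⁿ) + φ_n(B)·e`, and the error term is
controlled by the absolute row sums of `φ_n(B)`. Coefficientwise `|φ_n(B)|` is dominated by
`φ_n(|B|)`, whose row sums are its values at `x = 1`, namely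
`(|a|+|b|)^i (|c|+|d|)^{n−i} ≤ (2‖B‖)ⁿ`.
-/

/-- For a 2×2 matrix `B = ((a,b),(c,d))` over a commutative ring, `phiMap n B` is the
`(n+1)×(n+1)` matrix whose `(i,j)` entry is the coefficient of `x^j` in the polynomial
`(ax+b)^i (cx+d)^{n−i}`. -/
noncomputable def phiMap {R : Type*} [CommRing R] (n : ℕ) (B : Matrix (Fin 2) (Fin 2) R) :
    Matrix (Fin (n + 1)) (Fin (n + 1)) R :=
  Matrix.of fun i j =>
    ((Polynomial.C (B 0 0) * Polynomial.X + Polynomial.C (B 0 1)) ^ (i : ℕ) *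
      (Polynomial.C (B 1 0) * Polynomial.X + Polynomial.C (B 1 1)) ^ (n - (i : ℕ))).coeff
      (j : ℕ)

open Polynomial Matrix

theorem natDegree_linear_pow_mul_linear_pow_le {R : Type*} [CommSemiring R] (a b c d : R)
    (i k : ℕ) : ((C a * X + C b) ^ i * (C c * X + C d) ^ k).natDegree ≤ i + k := by
  simpa using natDegree_mul_le.trans
    (add_le_add (natDegree_pow_le_of_le i natDegree_linear_le)
      (natDegree_pow_le_of_le k natDegree_linear_le))

theorem phiMap_mulVec_pow {R : Type*} [CommRing R] (n : ℕ) (B : Matrix (Fin 2) (Fin 2) R)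
    (x : R) (i : Fin (n + 1)) :
    (phiMap n B *ᵥ fun j => x ^ (j : ℕ)) i =
      (B 0 0 * x + B 0 1) ^ (i : ℕ) * (B 1 0 * x + B 1 1) ^ (n - i) := by
  have hdeg := natDegree_linear_pow_mul_linear_pow_le (B 0 0) (B 0 1) (B 1 0) (B 1 1) i (n - i)
  rw [Nat.add_sub_cancel' i.is_le] at hdeg
  simp only [mulVec, dotProduct, phiMap, of_apply]
  rw [Fin.sum_univ_eq_sum_range (fun j => _ * x ^ j),
    ← eval_eq_sum_range' (Nat.lt_succ_of_le hdeg)]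
  simp

theorem phiMap_map {R S : Type*} [CommRing R] [CommRing S] (f : R →+* S) (n : ℕ)
    (B : Matrix (Fin 2) (Fin 2) R) : phiMap n (B.map f) = (phiMap n B).map f := by
  ext i j
  simp [phiMap, ← coeff_map]

theorem pow_mul_div_pow {K : Type*} [Field K] {x y : K} (hy : y ≠ 0) {i n : ℕ} (hi : i ≤ n) :
    y ^ n * (x / y) ^ i = x ^ i * y ^ (n - i) := by
  rw [div_pow, ← mul_div_assoc, div_eq_iff (pow_ne_zero _ hy), mul_assoc, ← pow_add,
    Nat.sub_add_cancel hi, mul_comm]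

section OrderedRing

variable {R : Type*} [CommRing R] [LinearOrder R] [IsStrictOrderedRing R]

theorem abs_coeff_mul_le {P Q P' Q' : R[X]} (hP : ∀ j, |P.coeff j| ≤ P'.coeff j)
    (hQ : ∀ j, |Q.coeff j| ≤ Q'.coeff j) (j : ℕ) : |(P * Q).coeff j| ≤ (P' * Q').coeff j := by
  simp only [coeff_mul]
  refine (Finset.abs_sum_le_sum_abs _ _).trans (Finset.sum_le_sum fun x _ => ?_)
  rw [abs_mul]
  exact mul_le_mul (hP _) (hQ _) (abs_nonneg _) ((abs_nonneg _).trans (hP _))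

theorem abs_coeff_pow_le {P P' : R[X]} (hP : ∀ j, |P.coeff j| ≤ P'.coeff j) (k j : ℕ) :
    |(P ^ k).coeff j| ≤ (P' ^ k).coeff j := by
  induction k generalizing j with
  | zero => simp only [pow_zero, coeff_one]; split_ifs <;> simp
  | succ k ih => rw [pow_succ, pow_succ]; exact abs_coeff_mul_le ih hP j

theorem abs_coeff_linear_le (a b : R) (j : ℕ) :
    |(C a * X + C b).coeff j| ≤ (C |a| * X + C |b|).coeff j := by
  simp only [coeff_add, coeff_C_mul_X, coeff_C]
  split_ifs <;> simp_all

theorem abs_phiMap_le (n : ℕ) (B : Matrix (Fin 2) (Fin 2) R) (i j : Fin (n + 1)) :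
    |phiMap n B i j| ≤ phiMap n (B.map (|·|)) i j :=
  abs_coeff_mul_le (abs_coeff_pow_le (abs_coeff_linear_le _ _) _)
    (abs_coeff_pow_le (abs_coeff_linear_le _ _) _) _

theorem sum_abs_phiMap_le (n : ℕ) (B : Matrix (Fin 2) (Fin 2) R) (i : Fin (n + 1)) :
    ∑ j, |phiMap n B i j| ≤ (|B 0 0| + |B 0 1|) ^ (i : ℕ) * (|B 1 0| + |B 1 1|) ^ (n - i) := by
  calc ∑ j, |phiMap n B i j| ≤ ∑ j, phiMap n (B.map (|·|)) i j :=
        Finset.sum_le_sum fun j _ => abs_phiMap_le n B i j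
    _ = (phiMap n (B.map (|·|)) *ᵥ fun j => (1 : R) ^ (j : ℕ)) i := by
        simp [mulVec, dotProduct]
    _ = _ := by rw [phiMap_mulVec_pow]; simp

theorem abs_mulVec_le {m k : Type*} [Fintype k] (M : Matrix m k R) {v : k → R} {δ : R}
    (hv : ∀ j, |v j| ≤ δ) (i : m) : |(M *ᵥ v) i| ≤ (∑ j, |M i j|) * δ := by
  rw [Finset.sum_mul]
  refine (Finset.abs_sum_le_sum_abs _ _).trans (Finset.sum_le_sum fun j _ => ?_)
  rw [abs_mul]
  exact mul_le_mul_of_nonneg_left (hv j) (abs_nonneg _)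

theorem abs_phiMap_mulVec_sub_le (n : ℕ) (B : Matrix (Fin 2) (Fin 2) R) {x δ : R}
    {p : Fin (n + 1) → R} (hp : ∀ j, |p j - p 0 * x ^ (j : ℕ)| ≤ δ) (i : Fin (n + 1)) :
    |(phiMap n B *ᵥ p) i - p 0 * ((B 0 0 * x + B 0 1) ^ (i : ℕ) * (B 1 0 * x + B 1 1) ^ (n - i))|
      ≤ (|B 0 0| + |B 0 1|) ^ (i : ℕ) * (|B 1 0| + |B 1 1|) ^ (n - i) * δ := by
  have hδ : 0 ≤ δ := (abs_nonneg _).trans (hp 0)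
  have hsplit : (phiMap n B *ᵥ p) i - p 0 * (phiMap n B *ᵥ fun j => x ^ (j : ℕ)) i =
      (phiMap n B *ᵥ (p - p 0 • fun j : Fin (n + 1) => x ^ (j : ℕ))) i := by
    rw [mulVec_sub, mulVec_smul, Pi.sub_apply, Pi.smul_apply, smul_eq_mul]
  rw [← phiMap_mulVec_pow, hsplit]
  exact (abs_mulVec_le _ hp i).trans (mul_le_mul_of_nonneg_right (sum_abs_phiMap_le n B i) hδ)

theorem add_abs_pow_mul_add_abs_pow_le (a b c d : R) {i n : ℕ} (hi : i ≤ n) :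
    (|a| + |b|) ^ i * (|c| + |d|) ^ (n - i) ≤ 2 ^ n * max (max |a| |b|) (max |c| |d|) ^ n := by
  set M := max (max |a| |b|) (max |c| |d|)
  have hab : |a| + |b| ≤ 2 * M := by
    linarith [le_max_left (max |a| |b|) (max |c| |d|), le_max_left |a| |b|, le_max_right |a| |b|]
  have hcd : |c| + |d| ≤ 2 * M := by
    linarith [le_max_right (max |a| |b|) (max |c| |d|), le_max_left |c| |d|, le_max_right |c| |d|]
  calc (|a| + |b|) ^ i * (|c| + |d|) ^ (n - i) ≤ (2 * M) ^ i * (2 * M) ^ (n - i) := by gcongr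
    _ = 2 ^ n * M ^ n := by rw [← pow_add, Nat.add_sub_cancel' hi, mul_pow]

theorem abs_mul_pow_sub_le_of_abs_sub_le {n : ℕ} {q : Fin (n + 1) → R} {s η K : R}
    (hq : ∀ i, |q i - s * η ^ (i : ℕ)| ≤ K) (i : Fin (n + 1)) :
    |q 0 * η ^ (i : ℕ) - q i| ≤ 2 * max 1 |η| ^ n * K := by
  have hK : 0 ≤ K := (abs_nonneg _).trans (hq 0)
  have hq0 : |q 0 - s| ≤ K := by simpa using hq 0
  have hηi : |η| ^ (i : ℕ) ≤ max 1 |η| ^ n :=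
    (pow_le_pow_left₀ (abs_nonneg η) (le_max_right _ _) i).trans
      (pow_le_pow_right₀ (le_max_left _ _) i.is_le)
  have hone : 1 ≤ max 1 |η| ^ n := one_le_pow₀ (le_max_left _ _)
  calc |q 0 * η ^ (i : ℕ) - q i| = |(q 0 - s) * η ^ (i : ℕ) - (q i - s * η ^ (i : ℕ))| := by
        ring_nf
    _ ≤ K * |η| ^ (i : ℕ) + K := by
        refine (abs_sub _ _).trans (add_le_add ?_ (hq i))
        rw [abs_mul, abs_pow]
        exact mul_le_mul_of_nonneg_right hq0 (by positivity)
    _ ≤ K * max 1 |η| ^ n + K * max 1 |η| ^ n := by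
        gcongr
        exact le_mul_of_one_le_right hK hone
    _ = 2 * max 1 |η| ^ n * K := by ring

end OrderedRing

theorem abs_intCast_phiMap_mulVec_sub_le {n : ℕ} (B : Matrix (Fin 2) (Fin 2) ℤ)
    {p : Fin (n + 1) → ℤ} {ξ δ : ℝ} (hcd : (B 1 0 : ℝ) * ξ + B 1 1 ≠ 0)
    (hp : ∀ j : Fin (n + 1), |(p j : ℝ) - p 0 * ξ ^ (j : ℕ)| ≤ δ) (i : Fin (n + 1)) :
    |((phiMap n B *ᵥ p) i : ℝ) - p 0 * ((B 1 0 : ℝ) * ξ + B 1 1) ^ n *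
        (((B 0 0 : ℝ) * ξ + B 0 1) / ((B 1 0 : ℝ) * ξ + B 1 1)) ^ (i : ℕ)|
      ≤ 2 ^ n * max (max |(B 0 0 : ℝ)| |(B 0 1 : ℝ)|) (max |(B 1 0 : ℝ)| |(B 1 1 : ℝ)|) ^ n * δ := by
  have hδ : 0 ≤ δ := (abs_nonneg _).trans (hp 0)
  have hcast : ((phiMap n B *ᵥ p) i : ℝ) =
      (phiMap n (B.map (Int.castRingHom ℝ)) *ᵥ fun j => (p j : ℝ)) i := by
    rw [phiMap_map]
    exact RingHom.map_mulVec (Int.castRingHom ℝ) _ _ i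
  rw [hcast, mul_assoc, pow_mul_div_pow hcd i.is_le]
  exact (abs_phiMap_mulVec_sub_le n _ hp i).trans (mul_le_mul_of_nonneg_right
    (add_abs_pow_mul_add_abs_pow_le _ _ _ _ i.is_le) hδ)

theorem stmt9_general (n : ℕ) :
    ∃ C : ℝ, 0 < C ∧
      ∀ (ξ lam : ℝ), 0 < lam →
      ∀ p : Fin (n + 1) → ℤ, 1 ≤ p 0 →
      (∀ i : Fin (n + 1), 1 ≤ i.1 →
        |(p 0 : ℝ) * ξ ^ (i.1) - (p i : ℝ)| ≤ (p 0 : ℝ) ^ (-lam)) →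
      ∀ B : Matrix (Fin 2) (Fin 2) ℤ, (B 1 0 : ℝ) * ξ + (B 1 1 : ℝ) ≠ 0 →
      ∀ η : ℝ, η = ((B 0 0 : ℝ) * ξ + (B 0 1 : ℝ)) / ((B 1 0 : ℝ) * ξ + (B 1 1 : ℝ)) →
      ∀ q : Fin (n + 1) → ℤ, q = (phiMap n B).mulVec p →
      ∀ NB : ℝ,
        NB = max (max |(B 0 0 : ℝ)| |(B 0 1 : ℝ)|) (max |(B 1 0 : ℝ)| |(B 1 1 : ℝ)|) →
      (|(q 0 : ℝ)| ≤
          C * (|(B 1 0 : ℝ) * ξ + (B 1 1 : ℝ)| ^ n * (p 0 : ℝ) +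
            NB ^ n * (p 0 : ℝ) ^ (-lam)) ∧
        ∀ i : Fin (n + 1), 1 ≤ i.1 →
          |(q 0 : ℝ) * η ^ (i.1) - (q i : ℝ)| ≤
            C * max 1 |η| ^ n * NB ^ n * (p 0 : ℝ) ^ (-lam)) := by
  refine ⟨2 ^ (n + 1), by positivity, ?_⟩
  intro ξ lam _ p hp0 happ B hcd η hη q hq NB hNB
  subst hη hq hNB
  set c := (B 1 0 : ℝ) * ξ + (B 1 1 : ℝ)
  set δ := (p 0 : ℝ) ^ (-lam)
  have hp0R : (1 : ℝ) ≤ p 0 := by exact_mod_cast hp0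
  have hδ : 0 ≤ δ := Real.rpow_nonneg (by linarith) _
  have hclose : ∀ j : Fin (n + 1), |(p j : ℝ) - p 0 * ξ ^ (j : ℕ)| ≤ δ := by
    intro j
    rcases Nat.eq_zero_or_pos j with hj | hj
    · simpa [show j = 0 from Fin.ext hj] using hδ
    · rw [abs_sub_comm]
      exact happ j hj
  have herr := abs_intCast_phiMap_mulVec_sub_le B hcd hclose
  refine ⟨?_, fun i _ => (abs_mul_pow_sub_le_of_abs_sub_le herr i).trans_eq (by ring)⟩
  set NB := max (max |(B 0 0 : ℝ)| |(B 0 1 : ℝ)|) (max |(B 1 0 : ℝ)| |(B 1 1 : ℝ)|)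
  have hX : 0 ≤ |c| ^ n * p 0 := by positivity
  have hY : 0 ≤ NB ^ n * δ := by positivity
  have h0 := herr 0
  rw [Fin.val_zero, pow_zero, mul_one] at h0
  have hs : |(p 0 : ℝ) * c ^ n| = |c| ^ n * p 0 := by
    rw [abs_mul, abs_pow, abs_of_pos (by linarith), mul_comm]
  calc _ ≤ |c| ^ n * p 0 + 2 ^ n * (NB ^ n * δ) := by
        linarith [abs_sub_abs_le_abs_sub ((phiMap n B *ᵥ p) 0 : ℝ) (p 0 * c ^ n)]
    _ ≤ 2 ^ n * (|c| ^ n * p 0) + 2 ^ n * (NB ^ n * δ) :=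
        add_le_add_left (le_mul_of_one_le_left hX (one_le_pow₀ one_le_two)) _
    _ ≤ 2 ^ (n + 1) * (|c| ^ n * p 0 + NB ^ n * δ) := by
        rw [pow_succ]
        nlinarith [mul_nonneg (pow_nonneg zero_le_two n) (add_nonneg hX hY)]

/-- If `p ∈ ℤ^{n+1}` is a good simultaneous rational approximation to
`(ξ, ξ², …, ξⁿ)`, then `q = φ_n(B)·p` is a good simultaneous rational approximation to
`(η, η², …, ηⁿ)` where `η = (aξ+b)/(cξ+d)`, with the quantitative bounds
`|q₀| ≤ C(|cξ+d|ⁿ p₀ + ‖B‖ⁿ p₀^{−λ})` and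
`max_{1≤i≤n} |q₀ηⁱ − q_i| ≤ C·max(1,|η|)ⁿ·‖B‖ⁿ·p₀^{−λ}`. -/
theorem stmt9 (n : ℕ) (hn : 1 ≤ n) :
    ∃ C : ℝ, 0 < C ∧
      ∀ (ξ lam : ℝ), 0 < lam →
      ∀ p : Fin (n + 1) → ℤ, 1 ≤ p 0 →
      (∀ i : Fin (n + 1), 1 ≤ i.1 →
        |(p 0 : ℝ) * ξ ^ (i.1) - (p i : ℝ)| ≤ (p 0 : ℝ) ^ (-lam)) →
      ∀ B : Matrix (Fin 2) (Fin 2) ℤ, (B 1 0 : ℝ) * ξ + (B 1 1 : ℝ) ≠ 0 →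
      ∀ η : ℝ, η = ((B 0 0 : ℝ) * ξ + (B 0 1 : ℝ)) / ((B 1 0 : ℝ) * ξ + (B 1 1 : ℝ)) →
      ∀ q : Fin (n + 1) → ℤ, q = (phiMap n B).mulVec p →
      ∀ NB : ℝ,
        NB = max (max |(B 0 0 : ℝ)| |(B 0 1 : ℝ)|) (max |(B 1 0 : ℝ)| |(B 1 1 : ℝ)|) →
      (|(q 0 : ℝ)| ≤
          C * (|(B 1 0 : ℝ) * ξ + (B 1 1 : ℝ)| ^ n * (p 0 : ℝ) +
            NB ^ n * (p 0 : ℝ) ^ (-lam)) ∧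
        ∀ i : Fin (n + 1), 1 ≤ i.1 →
          |(q 0 : ℝ) * η ^ (i.1) - (q i : ℝ)| ≤
            C * max 1 |η| ^ n * NB ^ n * (p 0 : ℝ) ^ (-lam)) :=
  stmt9_general n
end

section
/- Let n ≥ 1 be an integer, ξ ∈ ℝ, and let a, b, c, d be integers with ad − bc ≠ 0 and cξ + d ≠ 0. Then λ_n(ξ) = λ_n((aξ+b)/(cξ+d)). -/
open MeasureTheory
open scoped ENNReal

/-- Distance from a real number to the nearest integer. -/
noncomputable def distNearestInt (y : ℝ) : ℝ := |y - round y|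

/-- The `n`-th simultaneous Diophantine exponent `λ_n(x) ∈ [0,∞]`: the supremum of all
`λ > 0` such that `max_{1 ≤ i ≤ n} ‖q x^i‖ ≤ q^{-λ}` holds for infinitely many positive
integers `q`. -/
noncomputable def simExponent (n : ℕ) (x : ℝ) : ℝ≥0∞ :=
  sSup (ENNReal.ofReal '' {l : ℝ | 0 < l ∧
    {q : ℕ | 0 < q ∧
      ∀ i ∈ Finset.Icc 1 n, distNearestInt ((q : ℝ) * x ^ i) ≤ (q : ℝ) ^ (-l)}.Infinite})

/-- `S_n(I, λ) = {x ∈ I : λ_n(x) > λ}`. -/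
noncomputable def SimSet (n : ℕ) (I : Set ℝ) (lam : ℝ) : Set ℝ :=
  {x ∈ I | ENNReal.ofReal lam < simExponent n x}

/-!
If `q` approximates the powers `ξ, …, ξⁿ` simultaneously within `δ`, then for every integer
polynomial `P` of degree at most `n` the number `q P(ξ)` is within `O(δ)` of an integer. Writing
`η = (aξ+b)/(cξ+d)`, the numbers `(cξ+d)ⁿ ηⁱ = (aξ+b)ⁱ (cξ+d)ⁿ⁻ⁱ` are such values, so the integer
`q' = round (q (cξ+d)ⁿ) ≍ q` approximates `η, …, ηⁿ` within `O(q^{-λ})`, which is at most `q'^{-λ'}`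
for any `λ' < λ` once `q` is large. Hence `λ_n(ξ) ≤ λ_n(η)`, and the inverse Möbius map gives equality.
-/

open Polynomial Filter Topology Finset

lemma distNearestInt_le_abs_sub (y : ℝ) (k : ℤ) : distNearestInt y ≤ |y - k| := round_le y k

lemma distNearestInt_zero : distNearestInt 0 = 0 := by simp [distNearestInt]

lemma distNearestInt_neg (y : ℝ) : distNearestInt (-y) = distNearestInt y := by
  refine le_antisymm ?_ ?_
  · have := distNearestInt_le_abs_sub (-y) (-round y)
    rwa [Int.cast_neg, neg_sub_neg, abs_sub_comm] at this
  · have := distNearestInt_le_abs_sub y (-round (-y))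
    rwa [Int.cast_neg, sub_neg_eq_add, ← abs_neg, neg_add'] at this

lemma distNearestInt_abs_mul (x y : ℝ) : distNearestInt (|x| * y) = distNearestInt (x * y) := by
  rcases abs_choice x with h | h <;> simp [h, distNearestInt_neg]

lemma distNearestInt_add_le_add_abs (y z : ℝ) :
    distNearestInt (y + z) ≤ distNearestInt y + |z| :=
  (distNearestInt_le_abs_sub _ (round y)).trans <| by
    rw [add_sub_right_comm]; exact abs_add_le _ _

lemma distNearestInt_add_le (y z : ℝ) :
    distNearestInt (y + z) ≤ distNearestInt y + distNearestInt z :=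
  (distNearestInt_le_abs_sub _ (round y + round z)).trans <| by
    rw [Int.cast_add, add_sub_add_comm]; exact abs_add_le _ _

lemma distNearestInt_intCast_mul_le (k : ℤ) (y : ℝ) :
    distNearestInt (k * y) ≤ |(k : ℝ)| * distNearestInt y :=
  (distNearestInt_le_abs_sub _ (k * round y)).trans_eq <| by
    rw [Int.cast_mul, ← mul_sub, abs_mul, distNearestInt]

lemma distNearestInt_mul_aeval_le {P : ℤ[X]} {n : ℕ} (hP : P.natDegree ≤ n) (q y : ℝ) :
    distNearestInt (q * aeval y P) ≤
      ∑ j ∈ range (n + 1), |(P.coeff j : ℝ)| * distNearestInt (q * y ^ j) := by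
  rw [aeval_eq_sum_range' (Nat.lt_succ_of_le hP), mul_sum]
  refine (le_sum_of_subadditive _ distNearestInt_zero.le distNearestInt_add_le _ _).trans ?_
  refine sum_le_sum fun j _ => ?_
  rw [zsmul_eq_mul, mul_left_comm]
  exact distNearestInt_intCast_mul_le _ _

lemma eventually_mul_rpow_neg_le_rpow_neg (A : ℝ) {K l l' : ℝ} (hK : 0 < K) (hl' : l' < l) :
    ∀ᶠ x : ℝ in atTop, A * x ^ (-l) ≤ (K * x) ^ (-l') := by
  have hdecay : Tendsto (fun x : ℝ => A * x ^ (-(l - l'))) atTop (𝓝 0) := by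
    simpa using (tendsto_rpow_neg_atTop (sub_pos.2 hl')).const_mul A
  filter_upwards [hdecay.eventually (gt_mem_nhds (Real.rpow_pos_of_pos hK (-l'))),
    eventually_gt_atTop 0] with x hx hx0
  calc A * x ^ (-l) = A * x ^ (-(l - l')) * x ^ (-l') := by
        rw [mul_assoc, ← Real.rpow_add hx0]; ring_nf
    _ ≤ K ^ (-l') * x ^ (-l') := mul_le_mul_of_nonneg_right hx.le (by positivity)
    _ = (K * x) ^ (-l') := (Real.mul_rpow hK.le hx0.le).symm

def simApproxSet (n : ℕ) (x l : ℝ) : Set ℕ :=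
  {q : ℕ | 0 < q ∧ ∀ i ∈ Finset.Icc 1 n, distNearestInt ((q : ℝ) * x ^ i) ≤ (q : ℝ) ^ (-l)}

lemma simExponent_le_of_infinite {n : ℕ} {ξ η : ℝ}
    (h : ∀ l l', 0 < l' → l' < l → (simApproxSet n ξ l).Infinite →
      (simApproxSet n η l').Infinite) :
    simExponent n ξ ≤ simExponent n η := by
  refine sSup_le ?_
  rintro _ ⟨l, ⟨hl, hinf⟩, rfl⟩
  refine le_of_forall_lt_imp_le_of_dense fun m hm => ?_
  have hm_top : m ≠ ⊤ := ne_top_of_lt hm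
  have hm_lt : max m.toReal 0 < l :=
    max_lt ((ENNReal.lt_ofReal_iff_toReal_lt hm_top).1 hm) hl
  obtain ⟨l', hl'_gt, hl'_lt⟩ := exists_between hm_lt
  have hl'_pos : 0 < l' := (le_max_right _ _).trans_lt hl'_gt
  calc m ≤ ENNReal.ofReal l' :=
        (ENNReal.le_ofReal_iff_toReal_le hm_top hl'_pos.le).2
          (le_of_max_le_left hl'_gt.le)
    _ ≤ simExponent n η :=
        le_sSup ⟨l', ⟨hl'_pos, h l l' hl'_pos hl'_lt hinf⟩, rfl⟩

section AevalRelation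

variable {n : ℕ} {ξ η : ℝ} (P : ℕ → ℤ[X])

lemma exists_distNearestInt_round_mul_pow_le (hdeg : ∀ i ≤ n, (P i).natDegree ≤ n)
    (hP : ∀ i ≤ n, aeval ξ (P i) = aeval ξ (P 0) * η ^ i) :
    ∃ A : ℝ, ∀ (q : ℕ) (δ : ℝ), 0 ≤ δ → (∀ j ∈ Icc 1 n, distNearestInt (q * ξ ^ j) ≤ δ) →
      ∀ i ≤ n, distNearestInt (round (q * aeval ξ (P 0)) * η ^ i) ≤ A * δ := by
  set A₀ : ℝ := ∑ i ∈ range (n + 1), ∑ j ∈ range (n + 1), |((P i).coeff j : ℝ)|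
  have hA₀ : 0 ≤ A₀ := by positivity
  refine ⟨A₀ * (1 + (1 + |η|) ^ n), fun q δ hδ happrox => ?_⟩
  have happrox' : ∀ j ∈ range (n + 1), distNearestInt (q * ξ ^ j) ≤ δ := by
    intro j hj
    rcases Nat.eq_zero_or_pos j with rfl | hj0
    · simpa [distNearestInt] using hδ
    · exact happrox j (mem_Icc.2 ⟨hj0, Nat.lt_succ_iff.1 (mem_range.1 hj)⟩)
  have hvalue : ∀ i ≤ n, distNearestInt (q * aeval ξ (P i)) ≤ A₀ * δ := fun i hi =>
    calc distNearestInt (q * aeval ξ (P i))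
        ≤ ∑ j ∈ range (n + 1), |((P i).coeff j : ℝ)| * δ :=
          (distNearestInt_mul_aeval_le (hdeg i hi) _ _).trans
            (sum_le_sum fun j hj => mul_le_mul_of_nonneg_left (happrox' j hj) (abs_nonneg _))
      _ ≤ A₀ * δ := by
          rw [← sum_mul]
          refine mul_le_mul_of_nonneg_right ?_ hδ
          exact single_le_sum (f := fun i => ∑ j ∈ range (n + 1), |((P i).coeff j : ℝ)|)
            (fun _ _ => by positivity) (mem_range.2 (Nat.lt_succ_of_le hi))
  set y := (q : ℝ) * aeval ξ (P 0) with hy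
  have hround : |(round y : ℝ) - y| ≤ A₀ * δ := by
    rw [abs_sub_comm]; exact hvalue 0 (Nat.zero_le n)
  intro i hi
  calc distNearestInt (round y * η ^ i)
      = distNearestInt (q * aeval ξ (P i) + (round y - y) * η ^ i) := by
        rw [hP i hi, hy]; ring_nf
    _ ≤ A₀ * δ + A₀ * δ * (1 + |η|) ^ n := by
        refine (distNearestInt_add_le_add_abs _ _).trans (add_le_add (hvalue i hi) ?_)
        rw [abs_mul, abs_pow]
        exact mul_le_mul hround ((pow_le_pow_left₀ (abs_nonneg η) (by linarith) i).trans
          (pow_le_pow_right₀ (by linarith [abs_nonneg η]) hi)) (by positivity) (by positivity)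
    _ = A₀ * (1 + (1 + |η|) ^ n) * δ := by ring

lemma simApproxSet_infinite_of_aeval_eq (hdeg : ∀ i ≤ n, (P i).natDegree ≤ n)
    (hP : ∀ i ≤ n, aeval ξ (P i) = aeval ξ (P 0) * η ^ i) (hP0 : aeval ξ (P 0) ≠ 0)
    {l l' : ℝ} (hl' : 0 ≤ l') (hll' : l' < l) (h : (simApproxSet n ξ l).Infinite) :
    (simApproxSet n η l').Infinite := by
  obtain ⟨A, hA⟩ := exists_distNearestInt_round_mul_pow_le P hdeg hP
  set y₀ := aeval ξ (P 0)
  set f : ℕ → ℕ := fun q => (round (q * y₀)).natAbs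
  have hf_cast : ∀ q, (f q : ℝ) = |(round (q * y₀) : ℝ)| := fun q => by
    simp only [f, Nat.cast_natAbs, Int.cast_abs]
  have hf_ge : ∀ q : ℕ, (q : ℝ) * |y₀| + -1 ≤ f q := fun q => by
    have := abs_sub_round ((q : ℝ) * y₀)
    have := abs_sub_abs_le_abs_sub ((q : ℝ) * y₀) (round ((q : ℝ) * y₀))
    rw [abs_mul, Nat.abs_cast] at this
    rw [hf_cast]
    linarith
  have hf_le : ∀ q : ℕ, 1 ≤ q → (f q : ℝ) ≤ (|y₀| + 1) * q := fun q hq => by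
    have := abs_sub_round ((q : ℝ) * y₀)
    have hq' : (1 : ℝ) ≤ q := by exact_mod_cast hq
    rw [hf_cast]
    have := abs_sub_abs_le_abs_sub (round ((q : ℝ) * y₀) : ℝ) ((q : ℝ) * y₀)
    rw [abs_sub_comm, abs_mul, Nat.abs_cast] at this
    nlinarith
  have hf_tendsto : Tendsto f atTop atTop := by
    rw [← tendsto_natCast_atTop_iff (R := ℝ)]
    exact tendsto_atTop_mono hf_ge <| tendsto_atTop_add_const_right _ _ <|
      tendsto_natCast_atTop_atTop.atTop_mul_const (abs_pos.2 hP0)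
  have hev : ∀ᶠ q : ℕ in atTop,
      0 < f q ∧ A * (q : ℝ) ^ (-l) ≤ ((|y₀| + 1) * q) ^ (-l') :=
    (hf_tendsto.eventually (eventually_gt_atTop 0)).and <| tendsto_natCast_atTop_atTop.eventually
      (eventually_mul_rpow_neg_le_rpow_neg A (by positivity) hll')
  rw [simApproxSet, ← Nat.frequently_atTop_iff_infinite] at h ⊢
  refine hf_tendsto.frequently <| (h.and_eventually hev).mono ?_
  rintro q ⟨⟨hq0, hq⟩, hfq0, hAq⟩
  refine ⟨hfq0, fun i hi => ?_⟩
  calc distNearestInt (f q * η ^ i) = distNearestInt (round (q * y₀) * η ^ i) := by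
        rw [hf_cast, distNearestInt_abs_mul]
    _ ≤ A * (q : ℝ) ^ (-l) :=
        hA q _ (by positivity) hq i (mem_Icc.1 hi).2
    _ ≤ ((|y₀| + 1) * q) ^ (-l') := hAq
    _ ≤ (f q : ℝ) ^ (-l') :=
        Real.rpow_le_rpow_of_nonpos (by exact_mod_cast hfq0) (hf_le q hq0) (neg_nonpos.2 hl')

lemma simExponent_le_of_aeval_eq (hdeg : ∀ i ≤ n, (P i).natDegree ≤ n)
    (hP : ∀ i ≤ n, aeval ξ (P i) = aeval ξ (P 0) * η ^ i) (hP0 : aeval ξ (P 0) ≠ 0) :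
    simExponent n ξ ≤ simExponent n η :=
  simExponent_le_of_infinite fun _ _ hl' hll' =>
    simApproxSet_infinite_of_aeval_eq P hdeg hP hP0 hl'.le hll'

end AevalRelation

lemma simExponent_le_mobius (n : ℕ) (ξ : ℝ) (a b c d : ℤ) (h : (c : ℝ) * ξ + d ≠ 0) :
    simExponent n ξ ≤ simExponent n ((a * ξ + b) / (c * ξ + d)) := by
  set Q : ℕ → ℤ[X] := fun i => (C a * X + C b) ^ i * (C c * X + C d) ^ (n - i)
  have hQ : ∀ i, aeval ξ (Q i) = (a * ξ + b) ^ i * (c * ξ + d) ^ (n - i) := fun i => by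
    simp [Q]
  refine simExponent_le_of_aeval_eq Q (fun i hi => ?_) (fun i hi => ?_)
    (by simpa [hQ] using pow_ne_zero n h)
  · refine natDegree_mul_le.trans ?_
    have h₁ := (natDegree_pow_le (p := C a * X + C b) (n := i)).trans
      (Nat.mul_le_mul_left i natDegree_linear_le)
    have h₂ := (natDegree_pow_le (p := C c * X + C d) (n := n - i)).trans
      (Nat.mul_le_mul_left (n - i) natDegree_linear_le)
    omega
  · rw [hQ, hQ, div_pow, pow_sub₀ _ h hi, pow_zero, one_mul, Nat.sub_zero]
    field_simp

theorem stmt10_general (n : ℕ) (ξ : ℝ) (a b c d : ℤ)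
    (h1 : a * d - b * c ≠ 0) (h2 : (c : ℝ) * ξ + (d : ℝ) ≠ 0) :
    simExponent n ξ = simExponent n (((a : ℝ) * ξ + (b : ℝ)) / ((c : ℝ) * ξ + (d : ℝ))) := by
  set η := ((a : ℝ) * ξ + b) / (c * ξ + d)
  have hη : η * (c * ξ + d) = a * ξ + b := div_mul_cancel₀ _ h2
  have hdenom : (-c : ℤ) * η + (a : ℤ) = (a * d - b * c : ℤ) / (c * ξ + d) := by
    rw [eq_div_iff h2]; push_cast; linear_combination (-c : ℝ) * hη
  have hdenom_ne : ((-c : ℤ) : ℝ) * η + (a : ℤ) ≠ 0 := by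
    rw [hdenom]; exact div_ne_zero (by exact_mod_cast h1) h2
  have hinverse : ((d : ℤ) * η + (-b : ℤ)) / ((-c : ℤ) * η + (a : ℤ)) = ξ := by
    rw [div_eq_iff hdenom_ne]; push_cast; linear_combination hη
  refine le_antisymm (simExponent_le_mobius n ξ a b c d h2) ?_
  simpa only [hinverse] using simExponent_le_mobius n η d (-b) (-c) a hdenom_ne

/-- The simultaneous Diophantine exponent `λ_n` is invariant under the action of
integer Möbius maps: for integers `a, b, c, d` with `ad − bc ≠ 0` and `cξ + d ≠ 0`,
`λ_n(ξ) = λ_n((aξ+b)/(cξ+d))`. -/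
theorem stmt10 (n : ℕ) (hn : 1 ≤ n) (ξ : ℝ) (a b c d : ℤ)
    (h1 : a * d - b * c ≠ 0) (h2 : (c : ℝ) * ξ + (d : ℝ) ≠ 0) :
    simExponent n ξ = simExponent n (((a : ℝ) * ξ + (b : ℝ)) / ((c : ℝ) * ξ + (d : ℝ))) :=
  stmt10_general n ξ a b c d h1 h2
end

section
/- Let n ≥ 2 be an integer and let K ≥ 1 and c₃ > 0 be real. There exists a constant C > 0 depending only on n, K and c₃ such that the following holds. Let w > 0, let η be real with −w/2 < η < w/2, let Q > 1, let a = (a₀,…,a_n) ∈ ℝ^{n+1} with a_n = max_{0≤i≤n} |a_i| > 0, and set P(x) = a_nx^n + … + a₁x + a₀. Suppose J ⊆ [−K,K] is an interval with length |J| ≥ c₃·Q^{−w/2−η} such that |P(x)| < a_n·Q^{−w} for all x ∈ J. Then, denoting by x₁,…,x_n the complex roots of P counted with multiplicity, one has ∏_{1≤i<j≤n} |x_i − x_j|² ≤ C·Q^{−w+2η}; equivalently, the discriminant of P satisfies |D(P)| ≤ C·a_n^{2n−2}·Q^{−w+2η}, where D(P) = a_n^{2n−2}·∏_{1≤i<j≤n}(x_i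 − x_j)². -/
/-!
Since `a_n` is the largest coefficient, Cauchy's bound puts every root in the disc `|x| < 2`.
Among `n + 1` equally spaced points of `J`, one point `x₀` is at distance at least
`s = |J| / (2(n+1))` from the real part of every root, hence from every root. Then
`a_n ∏ₖ |x₀ - xₖ| = |P(x₀)| < a_n Q^{-w}`, and dividing out the closest root `x_{i₀}` leaves
`∏_{k ≠ i₀} |x₀ - xₖ| < Q^{-w} / s ≪ Q^{-w/2+η}`. In `∏_{i<j} |xᵢ - xⱼ|` the factors
`|x_{i₀} - xₖ| ≤ 2 |x₀ - xₖ|` carry this bound and all other factors are at most `4`;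
squaring gives `Q^{-w+2η}`.
-/

open Polynomial Finset

namespace Polynomial

variable {K : Type*} [NormedDivisionRing K] {p : K[X]}

theorem cauchyBound_le_two (h : ∀ i, ‖p.coeff i‖ ≤ ‖p.leadingCoeff‖) : cauchyBound p ≤ 2 := by
  have : (Finset.range p.natDegree).sup (‖p.coeff ·‖₊) / ‖p.leadingCoeff‖₊ ≤ 1 :=
    div_le_one_of_le₀ (Finset.sup_le fun i _ => h i) zero_le
  rw [cauchyBound, ← one_add_one_eq_two]
  gcongr

theorem IsRoot.norm_lt_two (hp : p ≠ 0) (h : ∀ i, ‖p.coeff i‖ ≤ ‖p.leadingCoeff‖) {x : K}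
    (hx : p.IsRoot x) : ‖x‖ < 2 := by
  have := (hx.norm_lt_cauchyBound hp).trans_le (cauchyBound_le_two h)
  exact_mod_cast this

end Polynomial

theorem norm_root_lt_two_of_norm_coeff_le {K : Type*} [NormedField K] {n : ℕ}
    {a : Fin (n + 1) → K} (ha : a (Fin.last n) ≠ 0) (hmax : ∀ i, ‖a i‖ ≤ ‖a (Fin.last n)‖)
    {z : Fin n → K}
    (hfact : ∑ i : Fin (n + 1), C (a i) * X ^ (i : ℕ) = C (a (Fin.last n)) * ∏ i, (X - C (z i)))
    (k : Fin n) : ‖z k‖ < 2 := by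
  classical
  set P := ∑ i : Fin (n + 1), C (a i) * X ^ (i : ℕ)
  have hP : P = ofFn (n + 1) a := by
    simp only [P, ofFn_eq_sum_monomial, C_mul_X_pow_eq_monomial]
  have hlead : P.leadingCoeff = a (Fin.last n) := by
    rw [hfact, leadingCoeff_mul, leadingCoeff_C,
      (monic_prod_of_monic _ _ fun i _ => monic_X_sub_C (z i)).leadingCoeff, mul_one]
  refine IsRoot.norm_lt_two (p := P) (fun h0 => ha ?_) (fun i => ?_) ?_
  · rw [← hlead, h0, leadingCoeff_zero]
  · rw [hlead, hP]
    rcases lt_or_ge i (n + 1) with hi | hi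
    · rw [ofFn_coeff_eq_val_of_lt a hi]; exact hmax _
    · rw [ofFn_coeff_eq_zero_of_ge a hi, norm_zero]; exact norm_nonneg _
  · simp [hfact, IsRoot, eval_prod, Finset.prod_eq_zero (Finset.mem_univ k)]

theorem exists_mem_Icc_forall_le_abs_sub {α β : ℝ} (hαβ : α ≤ β) {n : ℕ} (r : Fin n → ℝ) :
    ∃ x ∈ Set.Icc α β, ∀ k, (β - α) / (2 * (n + 1)) ≤ |x - r k| := by
  set s := (β - α) / (2 * (n + 1)) with hs
  have hs0 : 0 ≤ s := by positivity
  have hlen : 2 * (n + 1) * s = β - α := by rw [hs]; field_simp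
  -- Midpoints of the `n + 1` intervals of length `2 s` tiling `[α, β]`: they are `2 s` apart,
  -- so no `r k` is within `s` of two of them.
  set m : Fin (n + 1) → ℝ := fun t => α + (2 * t + 1) * s
  by_contra! hnear
  have hm : ∀ t, m t ∈ Set.Icc α β := fun t => by
    have ht : (t : ℝ) ≤ n := by exact_mod_cast Nat.lt_succ_iff.mp t.isLt
    constructor <;> nlinarith
  choose φ hφ using fun t => hnear (m t) (hm t)
  obtain ⟨t, t', hne, hφt⟩ := Fintype.exists_ne_map_eq_of_card_lt φ (by simp)
  have hclose : |m t - m t'| < 2 * s := by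
    have h := hφ t
    have h' := hφ t'
    rw [hφt] at h
    rw [abs_lt] at h h' ⊢
    constructor <;> linarith
  have hfar : 2 * s ≤ |m t - m t'| := by
    have hdist : (1 : ℝ) ≤ |((t : ℕ) : ℝ) - (t' : ℕ)| := by
      have : ((t : ℕ) : ℤ) - (t' : ℕ) ≠ 0 := by have := Fin.val_ne_of_ne hne; omega
      exact_mod_cast Int.one_le_abs this
    calc 2 * s ≤ 2 * s * |((t : ℕ) : ℝ) - (t' : ℕ)| := le_mul_of_one_le_right (by positivity) hdist
      _ = |m t - m t'| := by
        rw [show m t - m t' = 2 * s * (((t : ℕ) : ℝ) - (t' : ℕ)) by simp only [m]; ring,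
          abs_mul, abs_of_nonneg (by positivity : 0 ≤ 2 * s)]
  linarith

theorem exists_mem_Icc_forall_le_norm_sub {α β : ℝ} (hαβ : α ≤ β) {n : ℕ} (z : Fin n → ℂ) :
    ∃ x ∈ Set.Icc α β, ∀ k, (β - α) / (2 * (n + 1)) ≤ ‖(x : ℂ) - z k‖ := by
  obtain ⟨x, hx, hfar⟩ := exists_mem_Icc_forall_le_abs_sub hαβ fun k => (z k).re
  refine ⟨x, hx, fun k => (hfar k).trans ?_⟩
  simpa only [Complex.sub_re, Complex.ofReal_re] using Complex.abs_re_le_norm ((x : ℂ) - z k)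

theorem prod_erase_lt_div_of_le {ι : Type*} [DecidableEq ι] {s : Finset ι} {f : ι → ℝ}
    (hf : ∀ j ∈ s, 0 ≤ f j) {i : ι} (hi : i ∈ s) {r B : ℝ} (hr : 0 < r) (hri : r ≤ f i)
    (hB : ∏ j ∈ s, f j < B) : ∏ j ∈ s.erase i, f j < B / r := by
  rw [lt_div_iff₀' hr]
  calc r * ∏ j ∈ s.erase i, f j ≤ f i * ∏ j ∈ s.erase i, f j :=
        mul_le_mul_of_nonneg_right hri (prod_nonneg fun j hj => hf j (mem_of_mem_erase hj))
    _ = ∏ j ∈ s, f j := mul_prod_erase s f hi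
    _ < B := hB

section Pairs

variable {E ι : Type*} [SeminormedAddCommGroup E] [Fintype ι]

theorem prod_norm_sub_pairs_le_pow_mul_prod_erase [LinearOrder ι] {z : ι → E} {A : ℝ}
    (hA : 1 ≤ A) (hzA : ∀ i j, ‖z i - z j‖ ≤ A) (i₀ : ι) :
    ∏ pr ∈ univ.filter (fun pr : ι × ι => pr.1 < pr.2), ‖z pr.1 - z pr.2‖ ≤
      A ^ (Fintype.card ι ^ 2) * ∏ j ∈ univ.erase i₀, ‖z i₀ - z j‖ := by
  classical
  set S := univ.filter (fun pr : ι × ι => pr.1 < pr.2)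
  -- The pairs through `i₀` are the `edge j`, `j ≠ i₀`; every other factor is at most `A`.
  set edge : ι → ι × ι := fun j => (min i₀ j, max i₀ j)
  have hedge : (univ.erase i₀).image edge ⊆ S := by
    intro pr hpr
    obtain ⟨j, hj, rfl⟩ := mem_image.mp hpr
    simpa [S, edge, eq_comm] using ne_of_mem_erase hj
  have hinj : Set.InjOn edge (univ.erase i₀ : Finset ι) := by
    intro j _ j' _ h
    simp only [edge, Prod.ext_iff] at h
    rcases le_total i₀ j with h1 | h1 <;> rcases le_total i₀ j' with h2 | h2 <;> simp_all
  have hrest : ∏ pr ∈ S \ (univ.erase i₀).image edge, ‖z pr.1 - z pr.2‖ ≤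
      A ^ (Fintype.card ι ^ 2) :=
    calc _ ≤ ∏ _pr ∈ S \ (univ.erase i₀).image edge, A :=
          prod_le_prod (fun _ _ => norm_nonneg _) fun _ _ => hzA _ _
      _ ≤ A ^ (Fintype.card ι ^ 2) := by
        rw [prod_const]
        refine pow_le_pow_right₀ hA <|
          (card_le_card (sdiff_subset.trans (filter_subset _ _))).trans ?_
        simp [sq]
  rw [← prod_sdiff hedge, prod_image hinj]
  refine mul_le_mul hrest (le_of_eq (prod_congr rfl fun j _ => ?_))
    (prod_nonneg fun _ _ => norm_nonneg _) (by positivity)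
  rcases le_total i₀ j with h | h <;> simp [edge, h, norm_sub_rev]

theorem prod_erase_norm_sub_le_of_closest {z : ι → E} {x : E} {i₀ : ι} [DecidableEq ι]
    (hi₀ : ∀ j, ‖x - z i₀‖ ≤ ‖x - z j‖) :
    ∏ j ∈ univ.erase i₀, ‖z i₀ - z j‖ ≤ 2 ^ (Fintype.card ι - 1) * ∏ j ∈ univ.erase i₀, ‖x - z j‖ :=
  calc _ ≤ ∏ j ∈ univ.erase i₀, 2 * ‖x - z j‖ :=
        prod_le_prod (fun _ _ => norm_nonneg _) fun j _ => by
          have := norm_sub_le_norm_sub_add_norm_sub (z i₀) x (z j)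
          rw [norm_sub_rev (z i₀) x] at this
          linarith [hi₀ j]
    _ = _ := by rw [prod_mul_distrib, prod_const, card_erase_of_mem (mem_univ _), card_univ]

theorem prod_norm_sub_pairs_le_of_le_norm_sub [LinearOrder ι] [Nonempty ι] {z : ι → E} {A : ℝ}
    (hA : 1 ≤ A) (hzA : ∀ i j, ‖z i - z j‖ ≤ A) {x : E} {r B : ℝ} (hr : 0 < r)
    (hxz : ∀ k, r ≤ ‖x - z k‖) (hB : ∏ k, ‖x - z k‖ < B) :
    ∏ pr ∈ univ.filter (fun pr : ι × ι => pr.1 < pr.2), ‖z pr.1 - z pr.2‖ ≤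
      A ^ (Fintype.card ι ^ 2) * 2 ^ (Fintype.card ι - 1) * (B / r) := by
  classical
  obtain ⟨i₀, -, hi₀⟩ := exists_min_image univ (fun k => ‖x - z k‖) univ_nonempty
  calc _ ≤ A ^ (Fintype.card ι ^ 2) * ∏ j ∈ univ.erase i₀, ‖z i₀ - z j‖ :=
        prod_norm_sub_pairs_le_pow_mul_prod_erase hA hzA i₀
    _ ≤ A ^ (Fintype.card ι ^ 2) *
          (2 ^ (Fintype.card ι - 1) * ∏ j ∈ univ.erase i₀, ‖x - z j‖) := by
        gcongr
        exact prod_erase_norm_sub_le_of_closest fun j => hi₀ j (mem_univ j)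
    _ ≤ A ^ (Fintype.card ι ^ 2) * (2 ^ (Fintype.card ι - 1) * (B / r)) := by
        gcongr
        exact (prod_erase_lt_div_of_le (f := fun k => ‖x - z k‖) (fun _ _ => norm_nonneg _)
          (mem_univ i₀) hr (hxz i₀) hB).le
    _ = _ := (mul_assoc _ _ _).symm

end Pairs

theorem rpow_neg_div_le_rpow_div {Q c L w η : ℝ} (hQ : 0 < Q) (hc : 0 < c)
    (hL : c * Q ^ (-w / 2 - η) ≤ L) : Q ^ (-w) / L ≤ Q ^ (-w / 2 + η) / c := by
  have hQw : Q ^ (-w) = Q ^ (-w / 2 - η) * Q ^ (-w / 2 + η) := by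
    rw [← Real.rpow_add hQ]; ring_nf
  calc Q ^ (-w) / L ≤ Q ^ (-w) / (c * Q ^ (-w / 2 - η)) := by gcongr
    _ = Q ^ (-w / 2 + η) / c := by rw [hQw]; field_simp

theorem abs_sum_mul_pow_eq_mul_prod_norm_sub {n : ℕ} {a : Fin (n + 1) → ℝ}
    (han : 0 ≤ a (Fin.last n)) {z : Fin n → ℂ}
    (hfact : ∑ i : Fin (n + 1), C ((a i : ℂ)) * X ^ (i : ℕ) =
      C ((a (Fin.last n) : ℂ)) * ∏ i, (X - C (z i))) (x : ℝ) :
    |∑ i : Fin (n + 1), a i * x ^ (i : ℕ)| = a (Fin.last n) * ∏ k, ‖(x : ℂ) - z k‖ := by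
  have h := congrArg (fun p => ‖eval (x : ℂ) p‖) hfact
  simp only [eval_finsetSum, eval_mul, eval_C, eval_pow, eval_X, eval_prod, eval_sub,
    norm_mul, norm_prod, Complex.norm_real, Real.norm_of_nonneg han] at h
  rw [← h]
  norm_cast

theorem stmt13_general (n : ℕ) (hn : 2 ≤ n) (K c₃ : ℝ) (hc : 0 < c₃) :
    ∃ Cst : ℝ, 0 < Cst ∧
      ∀ (w η Q : ℝ), 0 < w → -w / 2 < η → η < w / 2 → 1 < Q →
      ∀ a : Fin (n + 1) → ℝ, 0 < a (Fin.last n) → (∀ i, |a i| ≤ a (Fin.last n)) →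
      ∀ α β : ℝ, Set.Icc α β ⊆ Set.Icc (-K) K →
        c₃ * Q ^ (-w / 2 - η) ≤ β - α →
      (∀ x ∈ Set.Icc α β,
        |∑ i : Fin (n + 1), a i * x ^ (i : ℕ)| < a (Fin.last n) * Q ^ (-w)) →
      ∀ z : Fin n → ℂ,
        (∑ i : Fin (n + 1), C ((a i : ℂ)) * X ^ (i : ℕ)) =
          C ((a (Fin.last n) : ℂ)) * ∏ i : Fin n, (X - C (z i)) →
        (∏ pr ∈ Finset.univ.filter (fun pr : Fin n × Fin n => pr.1 < pr.2),
            ‖z pr.1 - z pr.2‖ ^ 2) ≤ Cst * Q ^ (-w + 2 * η) ∧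
        ‖(a (Fin.last n) : ℂ) ^ (2 * n - 2) *
            ∏ pr ∈ Finset.univ.filter (fun pr : Fin n × Fin n => pr.1 < pr.2),
              (z pr.1 - z pr.2) ^ 2‖ ≤
          Cst * a (Fin.last n) ^ (2 * n - 2) * Q ^ (-w + 2 * η) := by
  set M : ℝ := 4 ^ (n ^ 2) * 2 ^ (n - 1) * (2 * (n + 1)) / c₃ with hM
  refine ⟨M ^ 2, by positivity, ?_⟩
  intro w η Q _ _ _ hQ a han hamax α β _ hlen hP z hfact
  have hQ0 : 0 < Q := one_pos.trans hQ
  have hαβ : α < β := sub_pos.mp <| (by positivity : 0 < c₃ * Q ^ (-w / 2 - η)).trans_le hlen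
  have hroots : ∀ k, ‖z k‖ < 2 := norm_root_lt_two_of_norm_coeff_le (a := fun i => (a i : ℂ))
    (by exact_mod_cast han.ne') (fun i => by simpa [abs_of_pos han] using hamax i) hfact
  obtain ⟨x₀, hx₀, hfar⟩ := exists_mem_Icc_forall_le_norm_sub hαβ.le z
  have hprod : ∏ k, ‖(x₀ : ℂ) - z k‖ < Q ^ (-w) := by
    have h := hP x₀ hx₀
    rw [abs_sum_mul_pow_eq_mul_prod_norm_sub han.le hfact] at h
    exact lt_of_mul_lt_mul_left h han.le
  have : Nonempty (Fin n) := ⟨⟨0, by omega⟩⟩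
  have hpairs : ∏ pr ∈ univ.filter (fun pr : Fin n × Fin n => pr.1 < pr.2),
      ‖z pr.1 - z pr.2‖ ≤ M * Q ^ (-w / 2 + η) :=
    calc _ ≤ 4 ^ (n ^ 2) * 2 ^ (n - 1) * (Q ^ (-w) / ((β - α) / (2 * (n + 1)))) := by
          simpa using prod_norm_sub_pairs_le_of_le_norm_sub (by norm_num)
            (fun i j => (norm_sub_le (z i) (z j)).trans (by linarith [hroots i, hroots j]))
            (by positivity) hfar hprod
      _ ≤ 4 ^ (n ^ 2) * 2 ^ (n - 1) * (Q ^ (-w / 2 + η) / c₃ * (2 * (n + 1))) := by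
          rw [div_div_eq_mul_div, mul_div_right_comm]
          gcongr ?_ * (?_ * _)
          exact rpow_neg_div_le_rpow_div hQ0 hc hlen
      _ = M * Q ^ (-w / 2 + η) := by rw [hM]; ring
  have hpairs_sq : ∏ pr ∈ univ.filter (fun pr : Fin n × Fin n => pr.1 < pr.2),
      ‖z pr.1 - z pr.2‖ ^ 2 ≤ M ^ 2 * Q ^ (-w + 2 * η) := by
    rw [prod_pow]
    calc _ ≤ (M * Q ^ (-w / 2 + η)) ^ 2 :=
          pow_le_pow_left₀ (prod_nonneg fun _ _ => norm_nonneg _) hpairs 2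
      _ = M ^ 2 * Q ^ (-w + 2 * η) := by
        rw [mul_pow, ← Real.rpow_mul_natCast hQ0.le]
        push_cast
        ring_nf
  refine ⟨hpairs_sq, ?_⟩
  rw [norm_mul, norm_pow, norm_prod, Complex.norm_real, Real.norm_of_nonneg han.le]
  simp only [norm_pow]
  rw [mul_comm (M ^ 2), mul_assoc]
  gcongr

/-- If a real polynomial `P(x) = a_n xⁿ + … + a₀` with `a_n = max_i |a_i| > 0` satisfies
`|P(x)| < a_n Q^{−w}` on an interval `J ⊆ [−K, K]` of length at least `c₃ Q^{−w/2−η}`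
with `−w/2 < η < w/2`, then the complex roots `x₁, …, x_n` of `P` (with multiplicity)
satisfy `∏_{i<j} |x_i − x_j|² ≤ C Q^{−w+2η}`; equivalently, the discriminant satisfies
`|D(P)| = |a_n^{2n−2} ∏_{i<j} (x_i − x_j)²| ≤ C a_n^{2n−2} Q^{−w+2η}`. -/
theorem stmt13 (n : ℕ) (hn : 2 ≤ n) (K c₃ : ℝ) (hK : 1 ≤ K) (hc : 0 < c₃) :
    ∃ Cst : ℝ, 0 < Cst ∧
      ∀ (w η Q : ℝ), 0 < w → -w / 2 < η → η < w / 2 → 1 < Q →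
      ∀ a : Fin (n + 1) → ℝ, 0 < a (Fin.last n) → (∀ i, |a i| ≤ a (Fin.last n)) →
      ∀ α β : ℝ, Set.Icc α β ⊆ Set.Icc (-K) K →
        c₃ * Q ^ (-w / 2 - η) ≤ β - α →
      (∀ x ∈ Set.Icc α β,
        |∑ i : Fin (n + 1), a i * x ^ (i : ℕ)| < a (Fin.last n) * Q ^ (-w)) →
      ∀ z : Fin n → ℂ,
        (∑ i : Fin (n + 1), C ((a i : ℂ)) * X ^ (i : ℕ)) =
          C ((a (Fin.last n) : ℂ)) * ∏ i : Fin n, (X - C (z i)) →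
        (∏ pr ∈ Finset.univ.filter (fun pr : Fin n × Fin n => pr.1 < pr.2),
            ‖z pr.1 - z pr.2‖ ^ 2) ≤ Cst * Q ^ (-w + 2 * η) ∧
        ‖(a (Fin.last n) : ℂ) ^ (2 * n - 2) *
            ∏ pr ∈ Finset.univ.filter (fun pr : Fin n × Fin n => pr.1 < pr.2),
              (z pr.1 - z pr.2) ^ 2‖ ≤
          Cst * a (Fin.last n) ^ (2 * n - 2) * Q ^ (-w + 2 * η) :=
  stmt13_general n hn K c₃ hc
end

section
/- There exists an absolute constant C > 0 such that every complex root x of a cubic polynomial P(x) = c₀ + c₁x + c₂x² + c₃x³ with real coefficients and c₃ ≠ 0 satisfies |x| ≤ C·H_d(P)/|c₃|. -/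
/-- The height `H_d` of a cubic polynomial `c₀ + c₁x + c₂x² + c₃x³` with real
coefficients. -/
noncomputable def Hd (c : Fin 4 → ℝ) : ℝ :=
  max |c 2| (max |c 3| (max (|c 1 * c 2| ^ ((1 : ℝ) / 2))
    (max (|c 0 * c 2 ^ 3| ^ ((1 : ℝ) / 4)) (max (|c 0 * c 3| ^ ((1 : ℝ) / 2))
      (max (|c 1 ^ 3 * c 3| ^ ((1 : ℝ) / 4)) (|c 0 * c 1 * c 2 * c 3| ^ ((1 : ℝ) / 4)))))))

/-!
Put `H = H_d(P)`, `A = |c₃|`, `t = |z|` and `s = A t`. The terms of `H_d` give `A ≤ H`, `|c₂| ≤ H`,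
`|c₀| A ≤ H²` and `|c₁|³ A ≤ H⁴`, hence also `|c₁| A ≤ H²`. Multiplying the Cauchy-type bound
`A t³ ≤ |c₀| + |c₁| t + |c₂| t²` by `A²` gives `s³ ≤ H³ + H² s + H s²`, which forces `s ≤ 2H`
because `8 > 1 + 2 + 4`. So `C = 2` works.
-/

theorem Real.le_rpow_of_rpow_one_div_le {x y p : ℝ} (hx : 0 ≤ x) (hy : 0 ≤ y) (hp : 0 < p)
    (h : x ^ (1 / p) ≤ y) : x ≤ y ^ p := by
  rwa [one_div, Real.rpow_inv_le_iff_of_pos hx hy hp] at h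

theorem norm_mul_pow_three_le_of_cubic_eq_zero {𝕜 : Type*} [NormedField 𝕜] {a₀ a₁ a₂ a₃ z : 𝕜}
    (hz : a₀ + a₁ * z + a₂ * z ^ 2 + a₃ * z ^ 3 = 0) :
    ‖a₃‖ * ‖z‖ ^ 3 ≤ ‖a₀‖ + ‖a₁‖ * ‖z‖ + ‖a₂‖ * ‖z‖ ^ 2 := by
  have hlead : a₃ * z ^ 3 = -(a₀ + a₁ * z + a₂ * z ^ 2) := by linear_combination hz
  calc ‖a₃‖ * ‖z‖ ^ 3 = ‖a₀ + a₁ * z + a₂ * z ^ 2‖ := by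
        rw [← norm_pow, ← norm_mul, hlead, norm_neg]
    _ ≤ ‖a₀‖ + ‖a₁ * z‖ + ‖a₂ * z ^ 2‖ := norm_add₃_le
    _ = ‖a₀‖ + ‖a₁‖ * ‖z‖ + ‖a₂‖ * ‖z‖ ^ 2 := by rw [norm_mul, norm_mul, norm_pow]

theorem le_two_mul_of_pow_three_le {s H : ℝ} (hH : 0 ≤ H) (hs : 0 ≤ s)
    (h : s ^ 3 ≤ H ^ 3 + H ^ 2 * s + H * s ^ 2) : s ≤ 2 * H := by
  by_contra! hlt
  have hs0 : 0 < s := by linarith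
  nlinarith [mul_pos hs0 hs0, mul_nonneg hH hs, mul_nonneg hH hH, mul_pos (mul_pos hs0 hs0) hs0]

namespace Hd

variable (c : Fin 4 → ℝ)

theorem abs_two_le : |c 2| ≤ Hd c := le_max_left _ _

theorem abs_three_le : |c 3| ≤ Hd c := le_max_of_le_right (le_max_left _ _)

theorem abs_zero_mul_abs_three_le : |c 0| * |c 3| ≤ Hd c ^ 2 := by
  have h : |c 0 * c 3| ^ ((1 : ℝ) / 2) ≤ Hd c :=
    le_max_of_le_right <| le_max_of_le_right <| le_max_of_le_right <| le_max_of_le_right <|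
      le_max_left _ _
  have h2 := Real.le_rpow_of_rpow_one_div_le (abs_nonneg _)
    ((abs_nonneg _).trans (abs_three_le c)) two_pos h
  rwa [Real.rpow_ofNat, abs_mul] at h2

theorem abs_one_pow_three_mul_abs_three_le : |c 1| ^ 3 * |c 3| ≤ Hd c ^ 4 := by
  have h : |c 1 ^ 3 * c 3| ^ ((1 : ℝ) / 4) ≤ Hd c :=
    le_max_of_le_right <| le_max_of_le_right <| le_max_of_le_right <| le_max_of_le_right <|
      le_max_of_le_right <| le_max_left _ _
  have h4 := Real.le_rpow_of_rpow_one_div_le (abs_nonneg _)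
    ((abs_nonneg _).trans (abs_three_le c)) four_pos h
  rwa [Real.rpow_ofNat, abs_mul, abs_pow] at h4

theorem abs_one_mul_abs_three_le : |c 1| * |c 3| ≤ Hd c ^ 2 := by
  have hA := abs_nonneg (c 3)
  have hAH := abs_three_le c
  refine le_of_pow_le_pow_left₀ three_ne_zero (sq_nonneg _) ?_
  calc (|c 1| * |c 3|) ^ 3 = (|c 1| ^ 3 * |c 3|) * |c 3| ^ 2 := by ring
    _ ≤ Hd c ^ 4 * Hd c ^ 2 := mul_le_mul (abs_one_pow_three_mul_abs_three_le c)
        (pow_le_pow_left₀ hA hAH 2) (sq_nonneg _) (pow_nonneg (hA.trans hAH) 4)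
    _ = (Hd c ^ 2) ^ 3 := by ring

end Hd

/-- There is an absolute constant `C > 0` such that every complex root `z` of a real
cubic polynomial `c₀ + c₁x + c₂x² + c₃x³` with `c₃ ≠ 0` satisfies
`|z| ≤ C·H_d(P)/|c₃|`. -/
theorem stmt15 :
    ∃ C : ℝ, 0 < C ∧
      ∀ c : Fin 4 → ℝ, c 3 ≠ 0 →
        ∀ z : ℂ,
          (c 0 : ℂ) + (c 1 : ℂ) * z + (c 2 : ℂ) * z ^ 2 + (c 3 : ℂ) * z ^ 3 = 0 →
          ‖z‖ ≤ C * Hd c / |c 3| := by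
  refine ⟨2, two_pos, fun c hc3 z hz => ?_⟩
  have hA : 0 < |c 3| := abs_pos.mpr hc3
  have hH : 0 ≤ Hd c := hA.le.trans (Hd.abs_three_le c)
  have hcauchy := norm_mul_pow_three_le_of_cubic_eq_zero hz
  simp only [Complex.norm_real, Real.norm_eq_abs] at hcauchy
  have hs : (|c 3| * ‖z‖) ^ 3 ≤ Hd c ^ 3 + Hd c ^ 2 * (|c 3| * ‖z‖) + Hd c * (|c 3| * ‖z‖) ^ 2 :=
    calc (|c 3| * ‖z‖) ^ 3 = |c 3| ^ 2 * (|c 3| * ‖z‖ ^ 3) := by ring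
      _ ≤ |c 3| ^ 2 * (|c 0| + |c 1| * ‖z‖ + |c 2| * ‖z‖ ^ 2) := by gcongr
      _ = (|c 0| * |c 3|) * |c 3| + (|c 1| * |c 3|) * (|c 3| * ‖z‖)
          + |c 2| * (|c 3| * ‖z‖) ^ 2 := by ring
      _ ≤ Hd c ^ 2 * Hd c + Hd c ^ 2 * (|c 3| * ‖z‖) + Hd c * (|c 3| * ‖z‖) ^ 2 := by
        gcongr
        exacts [Hd.abs_zero_mul_abs_three_le c, Hd.abs_three_le c, Hd.abs_one_mul_abs_three_le c,
          Hd.abs_two_le c]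
      _ = _ := by ring
  rw [le_div_iff₀ hA, mul_comm]
  exact le_two_mul_of_pow_three_le hH (by positivity) hs
end

section
/- Let λ > 1. Then there is no point (x₁, x₂) ∈ ℝ² with x₁² + x₂² = 3 such that max{‖q·x₁‖, ‖q·x₂‖} < q^{−λ} holds for infinitely many positive integers q. In other words, the set of simultaneously q^{−λ}-well approximable points in ℝ² has empty intersection with the circle x₁² + x₂² = 3. -/
open Filter Topology

theorem Nat.not_exists_prime_mul_sq_eq_sq_add_sq {p m : ℕ} [Fact p.Prime] (hp : p % 4 = 3)
    (hm : m ≠ 0) :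
    ¬ ∃ x y, p * m ^ 2 = x ^ 2 + y ^ 2 := by
  have hp0 : p ≠ 0 := (Fact.out : p.Prime).ne_zero
  rw [Nat.eq_sq_add_sq_iff]
  intro h
  have hv : padicValNat p (p * m ^ 2) = 2 * padicValNat p m + 1 := by
    rw [padicValNat.mul hp0 (pow_ne_zero 2 hm), padicValNat.pow, padicValNat_self]; ring
  have hmem : p ∈ (p * m ^ 2).primeFactors :=
    Nat.mem_primeFactors.mpr ⟨Fact.out, dvd_mul_right p _, mul_ne_zero hp0 (pow_ne_zero 2 hm)⟩
  have := h p hmem hp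
  rw [hv] at this
  exact Nat.not_even_two_mul_add_one _ this

theorem Int.eq_zero_of_sq_add_sq_eq_prime_mul_sq {p : ℕ} [Fact p.Prime] (hp : p % 4 = 3)
    {a b n : ℤ} (h : a ^ 2 + b ^ 2 = p * n ^ 2) : n = 0 := by
  by_contra hn
  refine Nat.not_exists_prime_mul_sq_eq_sq_add_sq hp (Int.natAbs_ne_zero.mpr hn)
    ⟨a.natAbs, b.natAbs, ?_⟩
  zify
  simpa only [sq_abs] using h.symm

theorem abs_sq_sub_round_sq_le (y : ℝ) :
    |y ^ 2 - (round y : ℝ) ^ 2| ≤ distNearestInt y * (2 * |y| + 1) := by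
  have hsum : |y + round y| ≤ 2 * |y| + 1 := by
    calc |y + round y| = |2 * y - (y - round y)| := by ring_nf
      _ ≤ |2 * y| + |y - round y| := abs_sub _ _
      _ ≤ 2 * |y| + 1 := by rw [abs_mul, abs_two]; linarith [abs_sub_round y]
  calc |y ^ 2 - (round y : ℝ) ^ 2| = distNearestInt y * |y + round y| := by
        rw [distNearestInt, ← abs_mul]; ring_nf
    _ ≤ distNearestInt y * (2 * |y| + 1) := mul_le_mul_of_nonneg_left hsum (abs_nonneg _)

theorem abs_sq_sub_round_sq_le_of_distNearestInt_lt {lam q x : ℝ} (hq : 1 ≤ q)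
    (h : distNearestInt (q * x) < q ^ (-lam)) :
    |(q * x) ^ 2 - (round (q * x) : ℝ) ^ 2| ≤ q ^ (1 - lam) * (2 * |x| + 1) := by
  have hq0 : 0 < q := by linarith
  calc |(q * x) ^ 2 - (round (q * x) : ℝ) ^ 2|
      ≤ distNearestInt (q * x) * (2 * |q * x| + 1) := abs_sq_sub_round_sq_le _
    _ ≤ q ^ (-lam) * (q * (2 * |x| + 1)) := by
        refine mul_le_mul h.le ?_ (by positivity) (by positivity)
        rw [abs_mul, abs_of_pos hq0]; nlinarith [abs_nonneg x]
    _ = q ^ (1 - lam) * (2 * |x| + 1) := by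
        rw [← mul_assoc, ← Real.rpow_add_one hq0.ne']; ring_nf

theorem eventually_round_sq_add_round_sq_eq {lam x₁ x₂ : ℝ} {c : ℤ} (hlam : 1 < lam)
    (hx : x₁ ^ 2 + x₂ ^ 2 = c) :
    ∀ᶠ q : ℕ in atTop, distNearestInt (q * x₁) < (q : ℝ) ^ (-lam) →
      distNearestInt (q * x₂) < (q : ℝ) ^ (-lam) →
      round (q * x₁) ^ 2 + round (q * x₂) ^ 2 = c * q ^ 2 := by
  set C := (2 * |x₁| + 1) + (2 * |x₂| + 1)
  have hlim : Tendsto (fun q : ℕ => (q : ℝ) ^ (1 - lam) * C) atTop (𝓝 0) := by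
    have h := (tendsto_rpow_neg_atTop (by linarith : 0 < lam - 1)).comp
      tendsto_natCast_atTop_atTop
    simpa [Function.comp_def] using h.mul_const C
  filter_upwards [hlim.eventually (gt_mem_nhds one_pos), eventually_ge_atTop 1]
    with q hsmall hq h₁ h₂
  have hq : (1 : ℝ) ≤ q := by exact_mod_cast hq
  rw [← sub_eq_zero, ← Int.abs_lt_one_iff, ← Int.cast_lt (R := ℝ), Int.cast_one]
  calc (↑|round (q * x₁) ^ 2 + round (q * x₂) ^ 2 - c * q ^ 2| : ℝ)
      = |((q * x₁) ^ 2 - (round (q * x₁) : ℝ) ^ 2) +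
          ((q * x₂) ^ 2 - (round (q * x₂) : ℝ) ^ 2)| := by
        rw [Int.cast_abs, ← abs_neg]; push_cast; congr 1; linear_combination -(q : ℝ) ^ 2 * hx
    _ ≤ (q : ℝ) ^ (1 - lam) * C := by
        refine (abs_add_le _ _).trans ?_
        linarith [abs_sq_sub_round_sq_le_of_distNearestInt_lt hq h₁,
          abs_sq_sub_round_sq_le_of_distNearestInt_lt hq h₂]
    _ < 1 := hsmall

theorem finite_setOf_distNearestInt_lt_of_sq_add_sq_eq_prime {p : ℕ} [Fact p.Prime]
    (hp : p % 4 = 3) {lam x₁ x₂ : ℝ} (hlam : 1 < lam) (hx : x₁ ^ 2 + x₂ ^ 2 = p) :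
    {q : ℕ | 0 < q ∧ distNearestInt ((q : ℝ) * x₁) < (q : ℝ) ^ (-lam) ∧
      distNearestInt ((q : ℝ) * x₂) < (q : ℝ) ^ (-lam)}.Finite := by
  rw [← Set.not_infinite, ← Nat.frequently_atTop_iff_infinite, not_frequently]
  filter_upwards [eventually_round_sq_add_round_sq_eq (c := p) hlam (mod_cast hx)]
    with q hq ⟨hq0, h₁, h₂⟩
  exact hq0.ne' (mod_cast Int.eq_zero_of_sq_add_sq_eq_prime_mul_sq hp (hq h₁ h₂))

/-- For `λ > 1` there is no point `(x₁, x₂)` on the circle `x₁² + x₂² = 3` such that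
`max{‖q·x₁‖, ‖q·x₂‖} < q^{−λ}` holds for infinitely many positive integers `q`; i.e.,
the set of simultaneously `q^{−λ}`-well approximable points of `ℝ²` misses this circle. -/
theorem stmt16 (lam : ℝ) (hlam : 1 < lam) :
    ¬ ∃ x₁ x₂ : ℝ, x₁ ^ 2 + x₂ ^ 2 = 3 ∧
      {q : ℕ | 0 < q ∧ distNearestInt ((q : ℝ) * x₁) < (q : ℝ) ^ (-lam) ∧
        distNearestInt ((q : ℝ) * x₂) < (q : ℝ) ^ (-lam)}.Infinite := by
  rintro ⟨x₁, x₂, hx, hinf⟩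
  exact hinf (finite_setOf_distNearestInt_lt_of_sq_add_sq_eq_prime (p := 3) rfl hlam
    (mod_cast hx))
end

section
/- Let n ≥ 2 be an integer, let I ⊂ ℝ be a compact interval, let M ≥ 1, and let f₂,…,f_n : I → ℝ be twice continuously differentiable functions with |f_i(x)| ≤ M, |f_i'(x)| ≤ M and |f_i''(x)| ≤ M for all x ∈ I and 2 ≤ i ≤ n. There exists a constant C > 0 depending only on n and M such that the following holds. Let 0 < λ ≤ 1, Q ≥ 1, q = (q₀, q₁, …, q_n) ∈ ℝ^{n+1} and x ∈ I satisfy Q ≤ max_{0≤i≤n}|q_i| < 2Q, |q₀x − q₁| ≤ (max_i|q_i|)^{−λ}, and |q₀f_i(x) − q_i| ≤ (max_i|q_i|)^{−λ} for all 2 ≤ i ≤ n. Then for every x₀ ∈ I with |x − x₀| ≤ Q^{−(1+λ)/2}: |q₀| ≤ 2Q, |q₀x₀ − q₁| ≤ C·Q^{(1−λ)/2}, and |q₀(f_i(x₀) − x₀f_i'(x₀)) + q₁f_i'(x₀) − q_i| ≤ C·Q^{−λ} for all 2 ≤ i ≤ n. -/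
/-! The tangent form `g(t) = q₀(f(t) − t f'(t)) + q₁ f'(t) − q_i` evaluates `q` against the
tangent line of the curve at `t`, and `g'(t) = f''(t)(q₁ − q₀t)`. Near `x` the factor
`q₁ − q₀t` is `O(1 + Q·Q^{−(1+λ)/2}) = O(Q^{(1−λ)/2})`, so by the mean value theorem `g`
moves by `O(Q^{(1−λ)/2} · Q^{−(1+λ)/2}) = O(Q^{−λ})` between `x` and `x₀`, while
`|g(x)| = O(Q^{−λ})` by the approximation hypotheses. -/

open Set

lemma abs_mul_sub_le_abs_mul_sub_add (a b x y : ℝ) :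
    |a * y - b| ≤ |a * x - b| + |a| * |x - y| := by
  calc |a * y - b| = |(a * x - b) - a * (x - y)| := by ring_nf
    _ ≤ |a * x - b| + |a * (x - y)| := abs_sub _ _
    _ = |a * x - b| + |a| * |x - y| := by rw [abs_mul]

section TangentForm

variable {f f' f'' : ℝ → ℝ} {s : Set ℝ} {a b c : ℝ}

lemma hasDerivWithinAt_tangentForm {t : ℝ} (hf : HasDerivWithinAt f (f' t) s t)
    (hf' : HasDerivWithinAt f' (f'' t) s t) :
    HasDerivWithinAt (fun u => a * (f u - u * f' u) + b * f' u - c)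
      (f'' t * (b - a * t)) s t := by
  refine (((hf.sub ((hasDerivWithinAt_id t s).mul hf')).const_mul a).add
    (hf'.const_mul b)).sub_const c |>.congr_deriv ?_
  simp only [id]
  ring

lemma abs_tangentForm_sub_le {x y M K : ℝ} (hs : uIcc x y ⊆ s)
    (hf : ∀ t ∈ s, HasDerivWithinAt f (f' t) s t)
    (hf' : ∀ t ∈ s, HasDerivWithinAt f' (f'' t) s t)
    (hf''M : ∀ t ∈ s, |f'' t| ≤ M) (hK : ∀ t ∈ uIcc x y, |a * t - b| ≤ K) :
    |(a * (f y - y * f' y) + b * f' y - c) - (a * (f x - x * f' x) + b * f' x - c)|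
      ≤ M * K * |x - y| := by
  have hderiv : ∀ t ∈ uIcc x y, HasDerivWithinAt (fun u => a * (f u - u * f' u) + b * f' u - c)
      (f'' t * (b - a * t)) (uIcc x y) t := fun t ht =>
    (hasDerivWithinAt_tangentForm (hf t (hs ht)) (hf' t (hs ht))).mono hs
  have hbound : ∀ t ∈ uIcc x y, ‖f'' t * (b - a * t)‖ ≤ M * K := fun t ht => by
    rw [Real.norm_eq_abs, abs_mul, abs_sub_comm]
    exact mul_le_mul (hf''M t (hs ht)) (hK t ht) (abs_nonneg _)
      ((abs_nonneg _).trans (hf''M t (hs ht)))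
  simpa only [Real.norm_eq_abs, abs_sub_comm y x] using
    (convex_uIcc x y).norm_image_sub_le_of_norm_hasDerivWithin_le hderiv hbound
      left_mem_uIcc right_mem_uIcc

lemma abs_tangentForm_le {x y M K ε δ : ℝ} (hs : uIcc x y ⊆ s)
    (hf : ∀ t ∈ s, HasDerivWithinAt f (f' t) s t)
    (hf' : ∀ t ∈ s, HasDerivWithinAt f' (f'' t) s t)
    (hf'M : |f' x| ≤ M) (hf''M : ∀ t ∈ s, |f'' t| ≤ M) (ha : |a| ≤ K)
    (hab : |a * x - b| ≤ ε) (hac : |a * f x - c| ≤ ε) (hxy : |x - y| ≤ δ) :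
    |a * (f y - y * f' y) + b * f' y - c| ≤ (1 + M) * ε + M * (ε + K * δ) * δ := by
  have hM : 0 ≤ M := (abs_nonneg _).trans hf'M
  have hε : 0 ≤ ε := (abs_nonneg _).trans hab
  have hK : ∀ t ∈ uIcc x y, |a * t - b| ≤ ε + K * δ := fun t ht =>
    calc |a * t - b| ≤ |a * x - b| + |a| * |x - t| := abs_mul_sub_le_abs_mul_sub_add a b x t
      _ ≤ ε + K * δ := by
        gcongr
        · exact (abs_nonneg _).trans ha
        · rw [abs_sub_comm]
          exact (abs_sub_left_of_mem_uIcc ht).trans (by rwa [abs_sub_comm])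
  have hx : |a * (f x - x * f' x) + b * f' x - c| ≤ (1 + M) * ε :=
    calc |a * (f x - x * f' x) + b * f' x - c| = |(a * f x - c) - f' x * (a * x - b)| := by
          ring_nf
      _ ≤ |a * f x - c| + |f' x| * |a * x - b| := by rw [← abs_mul]; exact abs_sub _ _
      _ ≤ ε + M * ε := by gcongr
      _ = (1 + M) * ε := by ring
  have hmove : |(a * (f y - y * f' y) + b * f' y - c) - (a * (f x - x * f' x) + b * f' x - c)|
      ≤ M * (ε + K * δ) * δ := by
    have : 0 ≤ ε + K * δ := by
      have := (abs_nonneg _).trans ha; have := (abs_nonneg _).trans hxy; positivity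
    exact (abs_tangentForm_sub_le hs hf hf' hf''M hK).trans (by gcongr)
  linarith [abs_sub_abs_le_abs_sub (a * (f y - y * f' y) + b * f' y - c)
    (a * (f x - x * f' x) + b * f' x - c)]

end TangentForm

section Exponents

variable {Q lam : ℝ}

lemma mul_rpow_neg_one_add_half (hQ : 0 < Q) :
    Q * Q ^ (-(1 + lam) / 2) = Q ^ ((1 - lam) / 2) := by
  nth_rewrite 1 [← Real.rpow_one Q]
  rw [← Real.rpow_add hQ]
  ring_nf

lemma rpow_one_sub_half_mul_rpow_neg_one_add_half (hQ : 0 < Q) :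
    Q ^ ((1 - lam) / 2) * Q ^ (-(1 + lam) / 2) = Q ^ (-lam) := by
  rw [← Real.rpow_add hQ]
  ring_nf

lemma add_two_mul_mul_rpow_le {ε : ℝ} (hQ : 1 ≤ Q) (hlam : lam ≤ 1) (hε : ε ≤ 1) :
    ε + 2 * Q * Q ^ (-(1 + lam) / 2) ≤ 3 * Q ^ ((1 - lam) / 2) := by
  have : 1 ≤ Q ^ ((1 - lam) / 2) := Real.one_le_rpow hQ (by linarith)
  rw [mul_assoc, mul_rpow_neg_one_add_half (by linarith)]
  linarith

end Exponents

theorem stmt17_general (n : ℕ) (M : ℝ) (hM : 1 ≤ M) :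
    ∃ C : ℝ, 0 < C ∧
      ∀ (A B : ℝ), A ≤ B →
      ∀ f f' f'' : ℕ → ℝ → ℝ,
      (∀ i, 2 ≤ i → i ≤ n → ∀ x ∈ Set.Icc A B,
        HasDerivWithinAt (f i) (f' i x) (Set.Icc A B) x) →
      (∀ i, 2 ≤ i → i ≤ n → ∀ x ∈ Set.Icc A B,
        HasDerivWithinAt (f' i) (f'' i x) (Set.Icc A B) x) →
      (∀ i, 2 ≤ i → i ≤ n → ContinuousOn (f'' i) (Set.Icc A B)) →
      (∀ i, 2 ≤ i → i ≤ n → ∀ x ∈ Set.Icc A B,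
        |f i x| ≤ M ∧ |f' i x| ≤ M ∧ |f'' i x| ≤ M) →
      ∀ (lam Q : ℝ), 0 < lam → lam ≤ 1 → 1 ≤ Q →
      ∀ q : Fin (n + 1) → ℝ, ∀ x ∈ Set.Icc A B,
      ∀ Nq : ℝ, Nq = (Finset.univ.sup' Finset.univ_nonempty fun i : Fin (n + 1) => |q i|) →
      Q ≤ Nq → Nq < 2 * Q →
      |q 0 * x - q 1| ≤ Nq ^ (-lam) →
      (∀ i : Fin (n + 1), 2 ≤ i.1 → |q 0 * f i.1 x - q i| ≤ Nq ^ (-lam)) →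
      ∀ x₀ ∈ Set.Icc A B, |x - x₀| ≤ Q ^ (-(1 + lam) / 2) →
        (|q 0| ≤ 2 * Q ∧
          |q 0 * x₀ - q 1| ≤ C * Q ^ ((1 - lam) / 2) ∧
          ∀ i : Fin (n + 1), 2 ≤ i.1 →
            |q 0 * (f i.1 x₀ - x₀ * f' i.1 x₀) + q 1 * f' i.1 x₀ - q i| ≤
              C * Q ^ (-lam)) := by
  refine ⟨5 * M, by linarith, ?_⟩
  intro A B _ f f' f'' hf hf' _ hbd lam Q hlam hlam1 hQ q x hx Nq hNq hQNq hNqQ hq1 hqi x₀ hx₀ hxx₀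
  have hQ0 : 0 < Q := by linarith
  have hq0 : |q 0| ≤ 2 * Q :=
    (hNq ▸ Finset.le_sup' (fun j : Fin (n + 1) => |q j|) (Finset.mem_univ 0)).trans hNqQ.le
  have hε : Nq ^ (-lam) ≤ Q ^ (-lam) := Real.rpow_le_rpow_of_nonpos hQ0 hQNq (by linarith)
  have hη : Q ^ (-lam) ≤ 1 := Real.rpow_le_one_of_one_le_of_nonpos hQ (by linarith)
  have hnear := add_two_mul_mul_rpow_le hQ hlam1 (hε.trans hη)
  have hρ : 0 ≤ Q ^ ((1 - lam) / 2) := by positivity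
  refine ⟨hq0, ?_, fun i hi => ?_⟩
  · calc |q 0 * x₀ - q 1| ≤ |q 0 * x - q 1| + |q 0| * |x - x₀| :=
          abs_mul_sub_le_abs_mul_sub_add _ _ _ _
      _ ≤ Nq ^ (-lam) + 2 * Q * Q ^ (-(1 + lam) / 2) := by gcongr
      _ ≤ 5 * M * Q ^ ((1 - lam) / 2) := by nlinarith
  · have hin : i.1 ≤ n := Nat.lt_succ_iff.mp i.2
    calc _ ≤ (1 + M) * Nq ^ (-lam) + M * (Nq ^ (-lam) + 2 * Q * Q ^ (-(1 + lam) / 2)) *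
            Q ^ (-(1 + lam) / 2) :=
          abs_tangentForm_le (uIcc_subset_Icc hx hx₀) (hf i hi hin) (hf' i hi hin)
            (hbd i hi hin x hx).2.1 (fun t ht => (hbd i hi hin t ht).2.2) hq0 hq1 (hqi i hi) hxx₀
      _ ≤ (1 + M) * Q ^ (-lam) + M * (3 * Q ^ ((1 - lam) / 2)) * Q ^ (-(1 + lam) / 2) := by
          gcongr
      _ = (1 + 4 * M) * Q ^ (-lam) := by
          rw [mul_assoc, mul_assoc, rpow_one_sub_half_mul_rpow_neg_one_add_half hQ0]; ring
      _ ≤ 5 * M * Q ^ (-lam) := by gcongr; linarith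

/-- If `q ∈ ℝ^{n+1}` with `Q ≤ ‖q‖_∞ < 2Q` approximates the point
`(x, f₂(x), …, f_n(x))` on the curve in the sense that `|q₀x − q₁| ≤ ‖q‖_∞^{−λ}` and
`|q₀f_i(x) − q_i| ≤ ‖q‖_∞^{−λ}` for `2 ≤ i ≤ n`, then for every
`x₀ ∈ I ∩ B(x, Q^{−(1+λ)/2})` one has `|q₀| ≤ 2Q`, `|q₀x₀ − q₁| ≤ C·Q^{(1−λ)/2}`, and
`|q₀(f_i(x₀) − x₀f_i'(x₀)) + q₁f_i'(x₀) − q_i| ≤ C·Q^{−λ}` for all `2 ≤ i ≤ n`,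
where `C > 0` depends only on `n` and the bound `M` on `f_i, f_i', f_i''`. -/
theorem stmt17 (n : ℕ) (hn : 2 ≤ n) (M : ℝ) (hM : 1 ≤ M) :
    ∃ C : ℝ, 0 < C ∧
      ∀ (A B : ℝ), A ≤ B →
      ∀ f f' f'' : ℕ → ℝ → ℝ,
      (∀ i, 2 ≤ i → i ≤ n → ∀ x ∈ Set.Icc A B,
        HasDerivWithinAt (f i) (f' i x) (Set.Icc A B) x) →
      (∀ i, 2 ≤ i → i ≤ n → ∀ x ∈ Set.Icc A B,
        HasDerivWithinAt (f' i) (f'' i x) (Set.Icc A B) x) →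
      (∀ i, 2 ≤ i → i ≤ n → ContinuousOn (f'' i) (Set.Icc A B)) →
      (∀ i, 2 ≤ i → i ≤ n → ∀ x ∈ Set.Icc A B,
        |f i x| ≤ M ∧ |f' i x| ≤ M ∧ |f'' i x| ≤ M) →
      ∀ (lam Q : ℝ), 0 < lam → lam ≤ 1 → 1 ≤ Q →
      ∀ q : Fin (n + 1) → ℝ, ∀ x ∈ Set.Icc A B,
      ∀ Nq : ℝ, Nq = (Finset.univ.sup' Finset.univ_nonempty fun i : Fin (n + 1) => |q i|) →
      Q ≤ Nq → Nq < 2 * Q →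
      |q 0 * x - q 1| ≤ Nq ^ (-lam) →
      (∀ i : Fin (n + 1), 2 ≤ i.1 → |q 0 * f i.1 x - q i| ≤ Nq ^ (-lam)) →
      ∀ x₀ ∈ Set.Icc A B, |x - x₀| ≤ Q ^ (-(1 + lam) / 2) →
        (|q 0| ≤ 2 * Q ∧
          |q 0 * x₀ - q 1| ≤ C * Q ^ ((1 - lam) / 2) ∧
          ∀ i : Fin (n + 1), 2 ≤ i.1 →
            |q 0 * (f i.1 x₀ - x₀ * f' i.1 x₀) + q 1 * f' i.1 x₀ - q i| ≤
              C * Q ^ (-lam)) :=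
  stmt17_general n M hM
end
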